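/- Fix n ≥ 1 and let E = ℂⁿ with real inner product ⟨u,v⟩ = Re ∑ₖ uₖ·conj(vₖ) and norm ‖·‖. Assume: H : E → ℝ is C¹ with ‖∇H(x)‖ ≤ C_X for all x, where C_X > 0; α₀ > 0 and 0 < h ≤ α₀/3; λ assigns to each x ∈ E a continuous real-linear functional λ_x : E → ℝ; on the set N := {x ∈ E : |H(x)| ≤ h} one has λ_x(i·∇H(x)) − H(x) ≥ α₀/3 and ‖λ_x‖ ≤ B_λ (operator norm) for some B_λ ≥ 0. Let A, S ∈ ℝ and let x : ℝ → E, τ, σ : ℝ → ℝ be C¹ and 1-periodic such that: (a) G := ( ∫₀¹ ‖x' − τ·i·∇H(x)‖² dt + ∫₀¹ |σ' − H(x)|² dt + ∫₀¹ |τ'|² dt )^{1/2} < (h/2)·min(1/C_X, 1); (b) | ∫₀¹ λ_{x(t)}(x'(t)) dt − ∫₀¹ σ(t)·τ'(t) dt − ∫₀¹ τ(t)·H(x(t)) dt | ≤ A; (c) ( ∫₀¹ |σ(t) − σ̂|² dt )^{1/2} ≤ S, where σ̂ := ∫₀¹ σ(t) dt. Then |τ(t)| ≤ (3/α₀)·(A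 + α₀·S + B) + α₀ for all t ∈ ℝ, where B := h·B_λ/(2·C_X). -/

import Mathlib

/-!
The deviation `x' - τ X_H` is small in `L²`. Since `X_H = i ∇H` is tangent to the level sets of
`H`, the loop `H ∘ x` oscillates little, and its mean is small because it equals
`-∫ (σ' - H ∘ x)`; so the loop stays in `N`. There the action density `λ(x') - τ H(x)` is
`τ (λ(X_H) - H) + λ(x' - τ X_H)` with `λ(X_H) - H ≥ α₀/3`. Unless `τ` vanishes on `[0,1]` it has
constant sign, so `(α₀/3) ∫ |τ|` is bounded by the action up to `∫ σ τ' = ∫ (σ - σ̂) τ'`, which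
Cauchy–Schwarz controls. Hence `|τ|` is small somewhere on `[0,1]`, and
`∫ |τ'| ≤ ‖τ'‖_{L²} ≤ α₀` spreads this to all of `ℝ` by periodicity.
-/

open MeasureTheory intervalIntegral

/-- The continuous real-linear functional `v ↦ Re ⟪y, v⟫ = Re ∑ₖ yₖ·conj(vₖ)` on
`ℂⁿ`, i.e. the real inner product with `y`. -/
noncomputable def realInnerCLM {n : ℕ} (y : EuclideanSpace ℂ (Fin n)) :
    EuclideanSpace ℂ (Fin n) →L[ℝ] ℝ :=
  Complex.reCLM.comp ((innerSL ℂ y).restrictScalars ℝ)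

open Set Real

theorem sqrt_lt_of_sqrt_add_add_lt {a b c m : ℝ} (ha : 0 ≤ a) (hb : 0 ≤ b) (hc : 0 ≤ c)
    (h : √(a + b + c) < m) : √a < m ∧ √b < m ∧ √c < m :=
  ⟨(Real.sqrt_le_sqrt (by linarith)).trans_lt h, (Real.sqrt_le_sqrt (by linarith)).trans_lt h,
    (Real.sqrt_le_sqrt (by linarith)).trans_lt h⟩

theorem integral_abs_mul_abs_le_sqrt_mul_sqrt {f g : ℝ → ℝ} {a b : ℝ} (hab : a ≤ b)
    (hf : Continuous f) (hg : Continuous g) :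
    ∫ t in a..b, |f t| * |g t| ≤ √(∫ t in a..b, f t ^ 2) * √(∫ t in a..b, g t ^ 2) := by
  have hL2 {φ : ℝ → ℝ} (hφ : Continuous φ) :
      MemLp (fun t => |φ t|) (ENNReal.ofReal 2) (volume.restrict (Ioc a b)) := by
    rw [ENNReal.ofReal_ofNat]
    exact (memLp_two_iff_integrable_sq hφ.abs.aestronglyMeasurable.restrict).2
      ((hφ.abs.pow 2).integrableOn_Icc.mono_set Ioc_subset_Icc_self)
  have key := integral_mul_le_Lp_mul_Lq_of_nonneg (μ := volume.restrict (Ioc a b))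
    Real.HolderConjugate.two_two (ae_of_all _ fun t => abs_nonneg (f t))
    (ae_of_all _ fun t => abs_nonneg (g t)) (hL2 hf) (hL2 hg)
  simpa [integral_of_le hab, Real.sqrt_eq_rpow] using key

theorem abs_integral_mul_le_sqrt_mul_sqrt {f g : ℝ → ℝ} {a b : ℝ} (hab : a ≤ b)
    (hf : Continuous f) (hg : Continuous g) :
    |∫ t in a..b, f t * g t| ≤ √(∫ t in a..b, f t ^ 2) * √(∫ t in a..b, g t ^ 2) :=
  calc |∫ t in a..b, f t * g t| ≤ ∫ t in a..b, |f t * g t| := abs_integral_le_integral_abs hab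
    _ = ∫ t in a..b, |f t| * |g t| := by simp only [abs_mul]
    _ ≤ _ := integral_abs_mul_abs_le_sqrt_mul_sqrt hab hf hg

theorem integral_abs_le_sqrt_integral_sq {f : ℝ → ℝ} (hf : Continuous f) :
    ∫ t in (0:ℝ)..1, |f t| ≤ √(∫ t in (0:ℝ)..1, f t ^ 2) := by
  simpa using integral_abs_mul_abs_le_sqrt_mul_sqrt zero_le_one hf continuous_const (g := 1)

theorem abs_sub_le_integral_abs_deriv {f f' : ℝ → ℝ} {a b s t : ℝ}
    (hf : ∀ t, HasDerivAt f (f' t) t) (hf' : Continuous f') (hs : s ∈ Icc a b)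
    (ht : t ∈ Icc a b) : |f t - f s| ≤ ∫ u in a..b, |f' u| := by
  wlog hst : s ≤ t generalizing s t
  · rw [abs_sub_comm]
    exact this ht hs (le_of_not_ge hst)
  rw [← integral_eq_sub_of_hasDerivAt (fun u _ => hf u) (hf'.intervalIntegrable s t)]
  calc |∫ u in s..t, f' u| ≤ ∫ u in s..t, |f' u| := abs_integral_le_integral_abs hst
    _ ≤ ∫ u in a..b, |f' u| := integral_mono_interval hs.1 hst ht.2
          (ae_of_all _ fun u => abs_nonneg (f' u)) (hf'.abs.intervalIntegrable a b)

theorem abs_integral_mul_le_of_integral_eq_zero {f g : ℝ → ℝ} {a b : ℝ} (hab : a ≤ b)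
    (hf : Continuous f) (hg : Continuous g) (hg0 : ∫ t in a..b, g t = 0) (c : ℝ) :
    |∫ t in a..b, f t * g t| ≤ √(∫ t in a..b, (f t - c) ^ 2) * √(∫ t in a..b, g t ^ 2) := by
  have hshift : ∫ t in a..b, f t * g t = ∫ t in a..b, (f t - c) * g t := by
    simp only [sub_mul]
    rw [integral_sub (f := fun t => f t * g t) (g := fun t => c * g t)
      ((hf.mul hg).intervalIntegrable a b) ((hg.const_smul c).intervalIntegrable a b),
      intervalIntegral.integral_const_mul, hg0, mul_zero, sub_zero]
  rw [hshift]
  exact abs_integral_mul_le_sqrt_mul_sqrt hab (hf.sub continuous_const) hg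

namespace Function.Periodic

variable {f f' : ℝ → ℝ}

theorem integral_deriv_eq_zero (hp : Periodic f 1) (hf : ∀ t, HasDerivAt f (f' t) t)
    (hf' : Continuous f') : ∫ t in (0:ℝ)..1, f' t = 0 := by
  rw [integral_eq_sub_of_hasDerivAt (fun t _ => hf t) (hf'.intervalIntegrable 0 1),
    ← zero_add 1, hp, sub_self]

theorem abs_sub_le_integral_abs_deriv (hp : Periodic f 1) (hf : ∀ t, HasDerivAt f (f' t) t)
    (hf' : Continuous f') {s : ℝ} (hs : s ∈ Icc 0 1) (t : ℝ) :
    |f t - f s| ≤ ∫ u in (0:ℝ)..1, |f' u| := by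
  obtain ⟨t₀, ht₀, hft⟩ := hp.exists_mem_Ico₀ one_pos t
  rw [hft]
  exact _root_.abs_sub_le_integral_abs_deriv hf hf' hs (Ico_subset_Icc_self ht₀)

theorem abs_sub_integral_le_integral_abs_deriv (hp : Periodic f 1)
    (hf : ∀ t, HasDerivAt f (f' t) t) (hf' : Continuous f') (t : ℝ) :
    |f t - ∫ s in (0:ℝ)..1, f s| ≤ ∫ u in (0:ℝ)..1, |f' u| := by
  have hfc : Continuous f := continuous_iff_continuousAt.2 fun t => (hf t).continuousAt
  calc |f t - ∫ s in (0:ℝ)..1, f s| = |∫ s in (0:ℝ)..1, (f t - f s)| := by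
        rw [integral_sub intervalIntegrable_const (hfc.intervalIntegrable 0 1)]
        simp
    _ ≤ ∫ s in (0:ℝ)..1, |f t - f s| := abs_integral_le_integral_abs zero_le_one
    _ ≤ ∫ _ in (0:ℝ)..1, ∫ u in (0:ℝ)..1, |f' u| :=
        integral_mono_on zero_le_one ((continuous_const.sub hfc).abs.intervalIntegrable 0 1)
          intervalIntegrable_const fun s hs => hp.abs_sub_le_integral_abs_deriv hf hf' hs t
    _ = ∫ u in (0:ℝ)..1, |f' u| := by simp

end Function.Periodic

theorem exists_abs_eq_mul_of_forall_ne_zero {α : Type*} [TopologicalSpace α] {τ : α → ℝ}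
    {S : Set α} (hS : IsPreconnected S) (hτ : ContinuousOn τ S) (h0 : ∀ t ∈ S, τ t ≠ 0) :
    ∃ ε : ℝ, |ε| = 1 ∧ ∀ t ∈ S, |τ t| = ε * τ t := by
  rcases hS.eq_or_eq_neg_of_sq_eq hτ.abs hτ (fun t _ => sq_abs (τ t)) (h0 _) with h | h
  · exact ⟨1, abs_one, fun t ht => by simp [h ht]⟩
  · exact ⟨-1, by simp, fun t ht => by simp [h ht]⟩

theorem mul_integral_abs_le_of_forall_ne_zero {τ u r : ℝ → ℝ} {a b c : ℝ} (hab : a ≤ b)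
    (hτ : Continuous τ) (hu : IntervalIntegrable u volume a b)
    (hr : IntervalIntegrable r volume a b) (hτ0 : ∀ t ∈ Icc a b, τ t ≠ 0)
    (hur : ∀ t ∈ Icc a b, ∃ F ≥ c, |u t - τ t * F| ≤ r t) :
    c * ∫ t in a..b, |τ t| ≤ |∫ t in a..b, u t| + ∫ t in a..b, r t := by
  obtain ⟨ε, hε, hετ⟩ := exists_abs_eq_mul_of_forall_ne_zero isPreconnected_Icc
    hτ.continuousOn hτ0
  have hpt : ∀ t ∈ Icc a b, c * |τ t| ≤ ε * u t + r t := by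
    intro t ht
    obtain ⟨F, hF, hdev⟩ := hur t ht
    have : |ε * (u t - τ t * F)| ≤ r t := by rwa [abs_mul, hε, one_mul]
    calc c * |τ t| ≤ F * |τ t| := mul_le_mul_of_nonneg_right hF (abs_nonneg _)
      _ = ε * u t - ε * (u t - τ t * F) := by rw [hετ t ht]; ring
      _ ≤ ε * u t + r t := by linarith [neg_abs_le (ε * (u t - τ t * F))]
  calc c * ∫ t in a..b, |τ t| = ∫ t in a..b, c * |τ t| :=
        (intervalIntegral.integral_const_mul _ _).symm
    _ ≤ ∫ t in a..b, (ε * u t + r t) :=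
        integral_mono_on hab ((hτ.abs.const_smul c).intervalIntegrable a b)
          ((hu.const_mul ε).add hr) hpt
    _ = ε * (∫ t in a..b, u t) + ∫ t in a..b, r t := by
        rw [integral_add (hu.const_mul ε) hr, intervalIntegral.integral_const_mul]
    _ ≤ |∫ t in a..b, u t| + ∫ t in a..b, r t := by
        have : |ε * ∫ t in a..b, u t| = |∫ t in a..b, u t| := by rw [abs_mul, hε, one_mul]
        linarith [le_abs_self (ε * ∫ t in a..b, u t)]

theorem exists_mem_Icc_mul_abs_le {τ u r : ℝ → ℝ} {c : ℝ} (hc : 0 ≤ c) (hτ : Continuous τ)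
    (hu : IntervalIntegrable u volume 0 1) (hr : IntervalIntegrable r volume 0 1)
    (hr0 : ∀ t ∈ Icc (0:ℝ) 1, 0 ≤ r t) (hur : ∀ t ∈ Icc (0:ℝ) 1, ∃ F ≥ c, |u t - τ t * F| ≤ r t) :
    ∃ t₁ ∈ Icc (0:ℝ) 1, c * |τ t₁| ≤ |∫ t in (0:ℝ)..1, u t| + ∫ t in (0:ℝ)..1, r t := by
  by_cases hzero : ∃ t ∈ Icc (0:ℝ) 1, τ t = 0
  · obtain ⟨t₁, ht₁, hτt₁⟩ := hzero
    refine ⟨t₁, ht₁, ?_⟩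
    rw [hτt₁, abs_zero, mul_zero]
    exact add_nonneg (abs_nonneg _) (integral_nonneg zero_le_one hr0)
  push Not at hzero
  obtain ⟨t₁, ht₁, hmin⟩ := isCompact_Icc.exists_isMinOn (nonempty_Icc.2 zero_le_one)
    hτ.abs.continuousOn
  refine ⟨t₁, ht₁, le_trans ?_
    (mul_integral_abs_le_of_forall_ne_zero zero_le_one hτ hu hr hzero hur)⟩
  gcongr
  calc |τ t₁| = ∫ _ in (0:ℝ)..1, |τ t₁| := by simp
    _ ≤ ∫ t in (0:ℝ)..1, |τ t| :=
        integral_mono_on zero_le_one intervalIntegrable_const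
          (hτ.abs.intervalIntegrable 0 1) fun t ht => hmin ht

section Hamiltonian

variable {n : ℕ}

theorem realInnerCLM_apply (y v : EuclideanSpace ℂ (Fin n)) :
    realInnerCLM y v = (inner ℂ y v).re :=
  rfl

theorem realInnerCLM_I_smul_self (y : EuclideanSpace ℂ (Fin n)) :
    realInnerCLM y (Complex.I • y) = 0 :=
  real_inner_I_smul_self ℂ y

theorem abs_realInnerCLM_le (y v : EuclideanSpace ℂ (Fin n)) :
    |realInnerCLM y v| ≤ ‖y‖ * ‖v‖ :=
  (Complex.abs_re_le_norm _).trans (norm_inner_le_norm y v)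

theorem abs_comp_le_sqrt_add_mul_sqrt {H : EuclideanSpace ℂ (Fin n) → ℝ}
    {g : EuclideanSpace ℂ (Fin n) → EuclideanSpace ℂ (Fin n)} {x dx : ℝ → EuclideanSpace ℂ (Fin n)}
    {τ dσ : ℝ → ℝ} {C : ℝ} (hH : ∀ y, HasFDerivAt H (realInnerCLM (g y)) y) (hg : Continuous g)
    (hgb : ∀ y, ‖g y‖ ≤ C) (hx : ∀ t, HasDerivAt x (dx t) t) (hdx : Continuous dx)
    (hxper : Function.Periodic x 1) (hτ : Continuous τ) (hdσ : Continuous dσ)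
    (hdσ0 : ∫ s in (0:ℝ)..1, dσ s = 0) (t : ℝ) :
    |H (x t)| ≤ √(∫ s in (0:ℝ)..1, (dσ s - H (x s)) ^ 2) +
      C * √(∫ s in (0:ℝ)..1, ‖dx s - τ s • Complex.I • g (x s)‖ ^ 2) := by
  have cx : Continuous x := continuous_iff_continuousAt.2 fun t => (hx t).continuousAt
  have cHx : Continuous fun s => H (x s) :=
    (continuous_iff_continuousAt.2 fun y => (hH y).continuousAt).comp cx
  have cw : Continuous fun s => dx s - τ s • Complex.I • g (x s) := by fun_prop
  have hHx (s : ℝ) : HasDerivAt (fun s => H (x s)) (realInnerCLM (g (x s)) (dx s)) s :=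
    (hH (x s)).comp_hasDerivAt s (hx s)
  have cdHx : Continuous fun s => realInnerCLM (g (x s)) (dx s) := by
    simp only [realInnerCLM_apply]
    exact Complex.continuous_re.comp ((hg.comp cx).inner hdx)
  have hdHx (s : ℝ) :
      |realInnerCLM (g (x s)) (dx s)| ≤ C * ‖dx s - τ s • Complex.I • g (x s)‖ := by
    have : realInnerCLM (g (x s)) (dx s) =
        realInnerCLM (g (x s)) (dx s - τ s • Complex.I • g (x s)) := by
      rw [map_sub, map_smul, realInnerCLM_I_smul_self, smul_zero, sub_zero]
    rw [this]
    exact (abs_realInnerCLM_le _ _).trans (by gcongr; exact hgb _)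
  have hmean : ∫ s in (0:ℝ)..1, H (x s) = -∫ s in (0:ℝ)..1, (dσ s - H (x s)) := by
    rw [integral_sub (hdσ.intervalIntegrable 0 1) (cHx.intervalIntegrable 0 1), hdσ0]
    ring
  calc |H (x t)| ≤ |∫ s in (0:ℝ)..1, H (x s)| + |H (x t) - ∫ s in (0:ℝ)..1, H (x s)| := by
        linarith [abs_sub_abs_le_abs_sub (H (x t)) (∫ s in (0:ℝ)..1, H (x s))]
    _ ≤ (∫ s in (0:ℝ)..1, |dσ s - H (x s)|) +
          ∫ s in (0:ℝ)..1, |realInnerCLM (g (x s)) (dx s)| := by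
        gcongr
        · rw [hmean, abs_neg]
          exact abs_integral_le_integral_abs zero_le_one
        · exact Function.Periodic.abs_sub_integral_le_integral_abs_deriv
            (fun s => congrArg H (hxper s)) hHx cdHx t
    _ ≤ (∫ s in (0:ℝ)..1, |dσ s - H (x s)|) +
          C * ∫ s in (0:ℝ)..1, ‖dx s - τ s • Complex.I • g (x s)‖ := by
        rw [← intervalIntegral.integral_const_mul]
        gcongr
        exact integral_mono_on zero_le_one (cdHx.abs.intervalIntegrable 0 1)
          ((cw.norm.const_smul C).intervalIntegrable 0 1) fun s _ => hdHx s
    _ ≤ _ := by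
        have hC : 0 ≤ C := (norm_nonneg _).trans (hgb 0)
        gcongr
        · exact integral_abs_le_sqrt_integral_sq (f := fun s => dσ s - H (x s)) (hdσ.sub cHx)
        · simpa only [abs_norm] using integral_abs_le_sqrt_integral_sq cw.norm

end Hamiltonian

theorem exists_mem_Icc_mul_abs_le_of_contact {E : Type*} [NormedAddCommGroup E]
    [NormedSpace ℝ E] {lam : E → E →L[ℝ] ℝ} {X : E → E} {H : E → ℝ} {x dx : ℝ → E}
    {τ : ℝ → ℝ} {c B : ℝ} (hc : 0 ≤ c) (hB : 0 ≤ B) (hτ : Continuous τ)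
    (hHx : Continuous fun t => H (x t)) (hlamcont : Continuous fun t => lam (x t) (dx t))
    (hw : Continuous fun t => dx t - τ t • X (x t))
    (hcontact : ∀ t, c ≤ lam (x t) (X (x t)) - H (x t)) (hlamb : ∀ t, ‖lam (x t)‖ ≤ B) :
    ∃ t₁ ∈ Icc (0:ℝ) 1, c * |τ t₁| ≤
      |(∫ t in (0:ℝ)..1, lam (x t) (dx t)) - ∫ t in (0:ℝ)..1, τ t * H (x t)| +
        B * √(∫ t in (0:ℝ)..1, ‖dx t - τ t • X (x t)‖ ^ 2) := by
  have cτH : Continuous fun t => τ t * H (x t) := hτ.mul hHx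
  have hdev (t : ℝ) : |lam (x t) (dx t) - τ t * H (x t) - τ t * (lam (x t) (X (x t)) - H (x t))|
      ≤ B * ‖dx t - τ t • X (x t)‖ := by
    rw [show lam (x t) (dx t) - τ t * H (x t) - τ t * (lam (x t) (X (x t)) - H (x t)) =
        lam (x t) (dx t - τ t • X (x t)) by rw [map_sub, map_smul, smul_eq_mul]; ring]
    exact ((lam (x t)).le_opNorm _).trans (by gcongr; exact hlamb t)
  obtain ⟨t₁, ht₁, hle⟩ := exists_mem_Icc_mul_abs_le
    (u := fun t => lam (x t) (dx t) - τ t * H (x t)) (r := fun t => B * ‖dx t - τ t • X (x t)‖)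
    hc hτ ((hlamcont.sub cτH).intervalIntegrable 0 1)
    ((hw.norm.const_smul B).intervalIntegrable 0 1)
    (fun t _ => by positivity) fun t _ => ⟨_, hcontact t, hdev t⟩
  refine ⟨t₁, ht₁, hle.trans ?_⟩
  rw [integral_sub (hlamcont.intervalIntegrable 0 1) (cτH.intervalIntegrable 0 1),
    intervalIntegral.integral_const_mul]
  gcongr
  simpa only [abs_norm] using integral_abs_le_sqrt_integral_sq hw.norm

theorem uniform_bound_on_tau_general
    (n : ℕ)
    (H : EuclideanSpace ℂ (Fin n) → ℝ)
    (g : EuclideanSpace ℂ (Fin n) → EuclideanSpace ℂ (Fin n))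
    (hH : ∀ x, HasFDerivAt H (realInnerCLM (g x)) x)
    (hg : Continuous g)
    (C_X : ℝ) (hCX : 0 < C_X) (hgb : ∀ x, ‖g x‖ ≤ C_X)
    (α₀ : ℝ) (hα₀ : 0 < α₀)
    (h : ℝ) (hh : 0 < h) (hhα : h ≤ α₀ / 3)
    (lam : EuclideanSpace ℂ (Fin n) → (EuclideanSpace ℂ (Fin n) →L[ℝ] ℝ))
    (B_lam : ℝ) (hBlam : 0 ≤ B_lam)
    (hcontact : ∀ x, |H x| ≤ h → α₀ / 3 ≤ lam x (Complex.I • g x) - H x)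
    (hlamb : ∀ x, |H x| ≤ h → ‖lam x‖ ≤ B_lam)
    (A S : ℝ)
    (x : ℝ → EuclideanSpace ℂ (Fin n)) (dx : ℝ → EuclideanSpace ℂ (Fin n))
    (τ σ dτ dσ : ℝ → ℝ)
    (hx : ∀ t, HasDerivAt x (dx t) t) (hdx : Continuous dx)
    (hτ : ∀ t, HasDerivAt τ (dτ t) t) (hdτ : Continuous dτ)
    (hσ : ∀ t, HasDerivAt σ (dσ t) t) (hdσ : Continuous dσ)
    (hxper : ∀ t, x (t + 1) = x t)
    (hτper : ∀ t, τ (t + 1) = τ t)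
    (hσper : ∀ t, σ (t + 1) = σ t)
    (hlamcont : Continuous fun t => lam (x t) (dx t))
    (hG : Real.sqrt
        ((∫ t in (0:ℝ)..1, ‖dx t - τ t • (Complex.I • g (x t))‖ ^ 2) +
         (∫ t in (0:ℝ)..1, (dσ t - H (x t)) ^ 2) +
         (∫ t in (0:ℝ)..1, (dτ t) ^ 2))
      < (h / 2) * min (1 / C_X) 1)
    (hA : |(∫ t in (0:ℝ)..1, lam (x t) (dx t)) -
           (∫ t in (0:ℝ)..1, σ t * dτ t) -
           (∫ t in (0:ℝ)..1, τ t * H (x t))| ≤ A)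
    (hS : Real.sqrt (∫ t in (0:ℝ)..1, (σ t - ∫ r in (0:ℝ)..1, σ r) ^ 2) ≤ S) :
    ∀ t, |τ t| ≤ (3 / α₀) * (A + α₀ * S + h * B_lam / (2 * C_X)) + α₀ := by
  have cx : Continuous x := continuous_iff_continuousAt.2 fun t => (hx t).continuousAt
  have cτ : Continuous τ := continuous_iff_continuousAt.2 fun t => (hτ t).continuousAt
  have cσ : Continuous σ := continuous_iff_continuousAt.2 fun t => (hσ t).continuousAt
  have cHx : Continuous fun t => H (x t) :=
    (continuous_iff_continuousAt.2 fun y => (hH y).continuousAt).comp cx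
  obtain ⟨hG₁, hG₂, hG₃⟩ := sqrt_lt_of_sqrt_add_add_lt
    (integral_nonneg zero_le_one fun t _ => by positivity)
    (integral_nonneg zero_le_one fun t _ => by positivity)
    (integral_nonneg zero_le_one fun t _ => by positivity) hG
  rw [mul_min_of_nonneg _ _ (by positivity), lt_min_iff, mul_one_div, mul_one,
    lt_div_iff₀' hCX] at hG₁ hG₂ hG₃
  have hN (t : ℝ) : |H (x t)| ≤ h := by
    linarith [abs_comp_le_sqrt_add_mul_sqrt hH hg hgb hx hdx hxper cτ hdσ
      (Function.Periodic.integral_deriv_eq_zero hσper hσ hdσ) t, hG₁.1, hG₂.2]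
  have hσdτ : |∫ t in (0:ℝ)..1, σ t * dτ t| ≤ S * α₀ :=
    (abs_integral_mul_le_of_integral_eq_zero zero_le_one cσ hdτ
      (Function.Periodic.integral_deriv_eq_zero hτper hτ hdτ) _).trans
      (mul_le_mul hS (by linarith [hG₃.2]) (sqrt_nonneg _) ((sqrt_nonneg _).trans hS))
  obtain ⟨t₁, ht₁, hτt₁⟩ := exists_mem_Icc_mul_abs_le_of_contact
    (X := fun y => Complex.I • g y) (c := α₀ / 3) (by positivity) hBlam cτ cHx
    hlamcont (by fun_prop) (fun t => hcontact _ (hN t)) (fun t => hlamb _ (hN t))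
  have haction : |(∫ t in (0:ℝ)..1, lam (x t) (dx t)) - ∫ t in (0:ℝ)..1, τ t * H (x t)| ≤
      A + S * α₀ := by
    calc _ = |((∫ t in (0:ℝ)..1, lam (x t) (dx t)) - (∫ t in (0:ℝ)..1, σ t * dτ t) -
           (∫ t in (0:ℝ)..1, τ t * H (x t))) + ∫ t in (0:ℝ)..1, σ t * dτ t| := by ring_nf
      _ ≤ A + S * α₀ := (abs_add_le _ _).trans (add_le_add hA hσdτ)
  have hB : B_lam * √(∫ t in (0:ℝ)..1, ‖dx t - τ t • (Complex.I • g (x t))‖ ^ 2) ≤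
      h * B_lam / (2 * C_X) := by
    rw [le_div_iff₀ (by positivity)]
    nlinarith [mul_le_mul_of_nonneg_left hG₁.1.le hBlam]
  have hτ₁ : |τ t₁| ≤ 3 / α₀ * (A + α₀ * S + h * B_lam / (2 * C_X)) := by
    rw [div_mul_eq_mul_div, le_div_iff₀ hα₀]
    linarith
  intro t
  linarith [abs_sub_abs_le_abs_sub (τ t) (τ t₁), integral_abs_le_sqrt_integral_sq hdτ, hG₃.2,
    Function.Periodic.abs_sub_le_integral_abs_deriv hτper hτ hdτ ht₁ t]

/-- Lemma 3.2 of the paper (flat model): an a priori uniform bound on the Lagrange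
multiplier `τ` for 1-periodic loops `(x,τ,σ)` with small action-gradient, bounded
action, and controlled oscillation of `σ`. -/
theorem uniform_bound_on_tau
    (n : ℕ) (hn : 1 ≤ n)
    (H : EuclideanSpace ℂ (Fin n) → ℝ)
    (g : EuclideanSpace ℂ (Fin n) → EuclideanSpace ℂ (Fin n))
    (hH : ∀ x, HasFDerivAt H (realInnerCLM (g x)) x)
    (hg : Continuous g)
    (C_X : ℝ) (hCX : 0 < C_X) (hgb : ∀ x, ‖g x‖ ≤ C_X)
    (α₀ : ℝ) (hα₀ : 0 < α₀)
    (h : ℝ) (hh : 0 < h) (hhα : h ≤ α₀ / 3)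
    (lam : EuclideanSpace ℂ (Fin n) → (EuclideanSpace ℂ (Fin n) →L[ℝ] ℝ))
    (B_lam : ℝ) (hBlam : 0 ≤ B_lam)
    (hcontact : ∀ x, |H x| ≤ h → α₀ / 3 ≤ lam x (Complex.I • g x) - H x)
    (hlamb : ∀ x, |H x| ≤ h → ‖lam x‖ ≤ B_lam)
    (A S : ℝ)
    (x : ℝ → EuclideanSpace ℂ (Fin n)) (dx : ℝ → EuclideanSpace ℂ (Fin n))
    (τ σ dτ dσ : ℝ → ℝ)
    (hx : ∀ t, HasDerivAt x (dx t) t) (hdx : Continuous dx)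
    (hτ : ∀ t, HasDerivAt τ (dτ t) t) (hdτ : Continuous dτ)
    (hσ : ∀ t, HasDerivAt σ (dσ t) t) (hdσ : Continuous dσ)
    (hxper : ∀ t, x (t + 1) = x t)
    (hτper : ∀ t, τ (t + 1) = τ t)
    (hσper : ∀ t, σ (t + 1) = σ t)
    (hlamcont : Continuous fun t => lam (x t) (dx t))
    (hG : Real.sqrt
        ((∫ t in (0:ℝ)..1, ‖dx t - τ t • (Complex.I • g (x t))‖ ^ 2) +
         (∫ t in (0:ℝ)..1, (dσ t - H (x t)) ^ 2) +
         (∫ t in (0:ℝ)..1, (dτ t) ^ 2))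
      < (h / 2) * min (1 / C_X) 1)
    (hA : |(∫ t in (0:ℝ)..1, lam (x t) (dx t)) -
           (∫ t in (0:ℝ)..1, σ t * dτ t) -
           (∫ t in (0:ℝ)..1, τ t * H (x t))| ≤ A)
    (hS : Real.sqrt (∫ t in (0:ℝ)..1, (σ t - ∫ r in (0:ℝ)..1, σ r) ^ 2) ≤ S) :
    ∀ t, |τ t| ≤ (3 / α₀) * (A + α₀ * S + h * B_lam / (2 * C_X)) + α₀ :=
  uniform_bound_on_tau_general n H g hH hg C_X hCX hgb α₀ hα₀ h hh hhα lam B_lam hBlam hcontact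
    hlamb A S x dx τ σ dτ dσ hx hdx hτ hdτ hσ hdσ hxper hτper hσper hlamcont hG hA hS
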